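/- For every p ∈ (0,2) and every ε ≥ 0, the function ψ_ε is concave on [0,∞), i.e., ψ_ε(λ s + (1−λ) t) ≥ λ ψ_ε(s) + (1−λ) ψ_ε(t) for all s, t ≥ 0 and λ ∈ [0,1]. -/
import Mathlib

/-- The smoothed `p/2`-power function `ψ_ε`. For `t ≥ 0` it equals
`(p/2)·t·ε^(p-2) + (1 - p/2)·ε^p` when `t < ε²` and `t^(p/2)` when `t ≥ ε²`. -/
noncomputable def psi (p ε t : ℝ) : ℝ :=
  if t < ε ^ 2 then (p / 2) * t * ε ^ (p - 2) + (1 - p / 2) * ε ^ p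
  else t ^ (p / 2)

/-- Bernoulli-type inequality: `x ^ θ ≤ 1 + θ (x - 1)` for `θ ∈ (0,1)`, `x ≥ 0`. -/
lemma bern_aux {θ x : ℝ} (h0 : 0 < θ) (h1 : θ < 1) (hx : 0 ≤ x) :
    x ^ θ ≤ 1 + θ * (x - 1) := by
  have h := Real.geom_mean_le_arith_mean2_weighted h0.le (by linarith : (0:ℝ) ≤ 1 - θ)
    hx zero_le_one (by ring)
  rw [Real.one_rpow, mul_one] at h
  linarith

/-- Tangent-line inequality for `x ↦ x ^ θ` at `m > 0`. -/
lemma tangent_aux {θ m x : ℝ} (h0 : 0 < θ) (h1 : θ < 1) (hm : 0 < m) (hx : 0 ≤ x) :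
    x ^ θ ≤ m ^ θ + θ * m ^ (θ - 1) * (x - m) := by
  have hxm : (0:ℝ) ≤ x / m := div_nonneg hx hm.le
  have hb := bern_aux h0 h1 hxm
  have hmul := mul_le_mul_of_nonneg_left hb (Real.rpow_nonneg hm.le θ)
  have hdiv : (x / m) ^ θ = x ^ θ / m ^ θ := Real.div_rpow hx hm.le θ
  have hmθ : (0:ℝ) < m ^ θ := Real.rpow_pos_of_pos hm θ
  have hsub : m ^ (θ - 1) * m = m ^ θ := by
    rw [← Real.rpow_add_one hm.ne']; congr 1; ring
  rw [hdiv] at hmul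
  have h1' : m ^ θ * (x ^ θ / m ^ θ) = x ^ θ := by field_simp
  rw [h1'] at hmul
  have key : m ^ θ * (1 + θ * (x / m - 1)) = m ^ θ + θ * m ^ (θ - 1) * (x - m) := by
    field_simp
    linear_combination (-θ) * (x - m) * hsub
  linarith [key ▸ hmul]

/-- Monotonicity of the tangent line of `x ↦ x^θ` in the base point, evaluated left of it. -/
lemma cross_aux {θ a b x : ℝ} (h0 : 0 < θ) (h1 : θ < 1) (ha : 0 < a) (hab : a ≤ b)
    (hx : 0 ≤ x) (hxa : x ≤ a) :
    a ^ θ + θ * a ^ (θ - 1) * (x - a) ≤ b ^ θ + θ * b ^ (θ - 1) * (x - b) := by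
  have hb : 0 < b := lt_of_lt_of_le ha hab
  have hber := bern_aux h0 h1 (div_nonneg ha.le hb.le)
  have hmul := mul_le_mul_of_nonneg_left hber (Real.rpow_nonneg hb.le θ)
  have hdiv : (a / b) ^ θ = a ^ θ / b ^ θ := Real.div_rpow ha.le hb.le θ
  have hbθ : (0:ℝ) < b ^ θ := Real.rpow_pos_of_pos hb θ
  have hsubb : b ^ (θ - 1) * b = b ^ θ := by
    rw [← Real.rpow_add_one hb.ne']; congr 1; ring
  rw [hdiv] at hmul
  have h1' : b ^ θ * (a ^ θ / b ^ θ) = a ^ θ := by field_simp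
  rw [h1'] at hmul
  have hkey : a ^ θ ≤ (1 - θ) * b ^ θ + θ * a * b ^ (θ - 1) := by
    have hexp : b ^ θ * (1 + θ * (a / b - 1)) = (1 - θ) * b ^ θ + θ * a * b ^ (θ - 1) := by
      field_simp
      linear_combination (-θ) * a * hsubb
    linarith [hexp ▸ hmul]
  have hanti : b ^ (θ - 1) ≤ a ^ (θ - 1) :=
    Real.rpow_le_rpow_of_nonpos ha hab (by linarith)
  have hsuba : a ^ (θ - 1) * a = a ^ θ := by
    rw [← Real.rpow_add_one ha.ne']; congr 1; ring
  have h3 : θ * a * a ^ (θ - 1) = θ * a ^ θ := by rw [mul_assoc, mul_comm a, hsuba]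
  have h4 : θ * b * b ^ (θ - 1) = θ * b ^ θ := by rw [mul_assoc, mul_comm b, hsubb]
  have hstep : θ * x * (a ^ (θ - 1) - b ^ (θ - 1)) ≤ θ * a * (a ^ (θ - 1) - b ^ (θ - 1)) := by
    apply mul_le_mul_of_nonneg_right _ (by linarith)
    exact mul_le_mul_of_nonneg_left hxa h0.le
  nlinarith [hkey, hstep, h3, h4]

/-- For every `p ∈ (0,2)` and `ε ≥ 0`, the function `ψ_ε` is concave on `[0,∞)`. -/
theorem psi_concaveOn (p ε : ℝ) (hp : p ∈ Set.Ioo (0 : ℝ) 2) (hε : 0 ≤ ε)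
    (s t lam : ℝ) (hs : 0 ≤ s) (ht : 0 ≤ t) (hlam0 : 0 ≤ lam) (hlam1 : lam ≤ 1) :
    lam * psi p ε s + (1 - lam) * psi p ε t ≤ psi p ε (lam * s + (1 - lam) * t) := by
  obtain ⟨hp0, hp2⟩ := hp
  have hθ0 : 0 < p / 2 := by linarith
  have hθ1 : p / 2 < 1 := by linarith
  have hm0 : 0 ≤ lam * s + (1 - lam) * t := by
    have := mul_nonneg hlam0 hs
    have := mul_nonneg (by linarith : (0:ℝ) ≤ 1 - lam) ht
    linarith
  rcases eq_or_lt_of_le hε with hε0 | hε' 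
  · -- ε = 0 : pure rpow, use library concavity
    subst hε0
    have hns : ¬ s < (0:ℝ) ^ 2 := by push_neg; simpa using hs
    have hnt : ¬ t < (0:ℝ) ^ 2 := by push_neg; simpa using ht
    have hnm : ¬ lam * s + (1 - lam) * t < (0:ℝ) ^ 2 := by push_neg; simpa using hm0
    simp only [psi, if_neg hns, if_neg hnt, if_neg hnm]
    have hc := (Real.strictConcaveOn_rpow hθ0 hθ1).concaveOn
    have := hc.2 (Set.mem_Ici.mpr hs) (Set.mem_Ici.mpr ht) hlam0
      (by linarith : (0:ℝ) ≤ 1 - lam) (by ring)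
    simpa [smul_eq_mul] using this
  · -- ε > 0
    have hE0 : (0:ℝ) < ε ^ 2 := by positivity
    have hEθ : (ε ^ 2 : ℝ) ^ (p / 2) = ε ^ p := by
      rw [← Real.rpow_natCast ε 2, ← Real.rpow_mul hε]
      norm_num
      congr 1
      ring
    have hEθ1 : (ε ^ 2 : ℝ) ^ (p / 2 - 1) = ε ^ (p - 2) := by
      rw [← Real.rpow_natCast ε 2, ← Real.rpow_mul hε]
      norm_num
      congr 1
      ring
    have hLT : ∀ x : ℝ, (p / 2) * x * ε ^ (p - 2) + (1 - p / 2) * ε ^ p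
        = (ε ^ 2 : ℝ) ^ (p / 2) + (p / 2) * (ε ^ 2 : ℝ) ^ (p / 2 - 1) * (x - ε ^ 2) := by
      intro x
      rw [hEθ, hEθ1]
      have h2 : ε ^ (p - 2) * ε ^ 2 = ε ^ p := by
        rw [← Real.rpow_natCast ε 2, ← Real.rpow_add hε']
        norm_num
      nlinarith [h2]
    by_cases hmE : lam * s + (1 - lam) * t < ε ^ 2
    · have key : ∀ x : ℝ, 0 ≤ x →
          psi p ε x ≤ (p / 2) * x * ε ^ (p - 2) + (1 - p / 2) * ε ^ p := by
        intro x hx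
        unfold psi
        split
        · exact le_refl _
        · next h =>
          push_neg at h
          rw [hLT x]
          exact tangent_aux hθ0 hθ1 hE0 hx
      have h1 := mul_le_mul_of_nonneg_left (key s hs) hlam0
      have h2 := mul_le_mul_of_nonneg_left (key t ht) (by linarith : (0:ℝ) ≤ 1 - lam)
      have hpsim : psi p ε (lam * s + (1 - lam) * t)
          = (p / 2) * (lam * s + (1 - lam) * t) * ε ^ (p - 2) + (1 - p / 2) * ε ^ p := by
        rw [psi, if_pos hmE]
      rw [hpsim]
      nlinarith [h1, h2]
    · push_neg at hmE
      have hmpos : (0:ℝ) < lam * s + (1 - lam) * t := lt_of_lt_of_le hE0 hmE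
      set m := lam * s + (1 - lam) * t with hm
      have key : ∀ x : ℝ, 0 ≤ x →
          psi p ε x ≤ m ^ (p / 2) + (p / 2) * m ^ (p / 2 - 1) * (x - m) := by
        intro x hx
        unfold psi
        split
        · next h =>
          rw [hLT x]
          exact cross_aux hθ0 hθ1 hE0 hmE hx h.le
        · exact tangent_aux hθ0 hθ1 hmpos hx
      have h1 := mul_le_mul_of_nonneg_left (key s hs) hlam0
      have h2 := mul_le_mul_of_nonneg_left (key t ht) (by linarith : (0:ℝ) ≤ 1 - lam)
      have hpsim : psi p ε m = m ^ (p / 2) := by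
        rw [psi, if_neg (not_lt.mpr hmE)]
      rw [hm, ← hm, hpsim]
      nlinarith [h1, h2]
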